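/- The matrix Φ is positive definite (as a Hermitian matrix in Matrix (Fin 3) (Fin 3) ℂ). This is the positivity property of the Mazur construction that is ensured by choosing the axial Killing vector, for which X > 0 outside the axis. -/

import Mathlib

open Complex ComplexConjugate Matrix
open scoped ComplexOrder

lemma quad_pos (v0 v1 v2 x0 x1 x2 : ℂ)
    (hv : v0 * conj v0 = 1 + v1 * conj v1 + v2 * conj v2)
    (hx : ¬ (x0 = 0 ∧ x1 = 0 ∧ x2 = 0)) :
    0 < -(conj x0 * x0) + conj x1 * x1 + conj x2 * x2
        + 2 * conj (v0*x0+v1*x1+v2*x2) * (v0*x0+v1*x1+v2*x2) := by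
  set s : ℂ := v0*x0+v1*x1+v2*x2 with hs
  have hKc : ((Complex.normSq v0 : ℝ) : ℂ) = v0 * conj v0 := (Complex.mul_conj v0).symm
  have hK1 : (1:ℝ) ≤ Complex.normSq v0 := by
    have : ((Complex.normSq v0 : ℝ) : ℂ) = 1 + Complex.normSq v1 + Complex.normSq v2 := by
      rw [hKc, hv, Complex.mul_conj, Complex.mul_conj]
    have hr : Complex.normSq v0 = 1 + Complex.normSq v1 + Complex.normSq v2 := by
      exact_mod_cast this
    nlinarith [Complex.normSq_nonneg v1, Complex.normSq_nonneg v2]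
  have hK0 : (0:ℝ) < Complex.normSq v0 := by linarith
  have key : ((Complex.normSq v0 : ℝ) : ℂ)
        * (-(conj x0 * x0) + conj x1 * x1 + conj x2 * x2 + 2 * conj s * s)
      = ((Complex.normSq v0 * Complex.normSq s + Complex.normSq (x1 + conj v1 * s)
          + Complex.normSq (x2 + conj v2 * s)
          + Complex.normSq (conj v2 * x1 - conj v1 * x2) : ℝ) : ℂ) := by
    push_cast
    rw [hKc, ← Complex.mul_conj s, ← Complex.mul_conj (x1 + conj v1 * s),
      ← Complex.mul_conj (x2 + conj v2 * s),
      ← Complex.mul_conj (conj v2 * x1 - conj v1 * x2), hs]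
    simp only [map_add, map_sub, _root_.map_mul, conj_conj]
    linear_combination (x1 * conj x1 + x2 * conj x2
      + (v0*x0+v1*x1+v2*x2) * (conj v0 * conj x0 + conj v1 * conj x1 + conj v2 * conj x2)) * hv
  have hRpos : 0 < Complex.normSq v0 * Complex.normSq s + Complex.normSq (x1 + conj v1 * s)
      + Complex.normSq (x2 + conj v2 * s) + Complex.normSq (conj v2 * x1 - conj v1 * x2) := by
    have t0 : 0 ≤ Complex.normSq v0 * Complex.normSq s :=
      mul_nonneg hK0.le (Complex.normSq_nonneg s)
    have t1 := Complex.normSq_nonneg (x1 + conj v1 * s)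
    have t2 := Complex.normSq_nonneg (x2 + conj v2 * s)
    have t3 := Complex.normSq_nonneg (conj v2 * x1 - conj v1 * x2)
    rcases lt_or_eq_of_le (by linarith :
        (0:ℝ) ≤ Complex.normSq v0 * Complex.normSq s + Complex.normSq (x1 + conj v1 * s)
        + Complex.normSq (x2 + conj v2 * s)
        + Complex.normSq (conj v2 * x1 - conj v1 * x2)) with h | h
    · exact h
    exfalso
    have e0 : Complex.normSq v0 * Complex.normSq s = 0 := by linarith
    have hs0 : s = 0 := by
      rcases mul_eq_zero.mp e0 with h' | h'
      · exact absurd h' hK0.ne'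
      · exact Complex.normSq_eq_zero.mp h'
    have e1 : Complex.normSq (x1 + conj v1 * s) = 0 := by linarith
    have e2 : Complex.normSq (x2 + conj v2 * s) = 0 := by linarith
    have h2 : x1 = 0 := by
      have := Complex.normSq_eq_zero.mp e1; rw [hs0] at this; simpa using this
    have h3 : x2 = 0 := by
      have := Complex.normSq_eq_zero.mp e2; rw [hs0] at this; simpa using this
    have hv0 : v0 ≠ 0 := fun h0 => by simp [h0] at hK0
    have h4 : x0 = 0 := by
      have : v0 * x0 = 0 := by rw [hs, h2, h3] at hs0; simpa using hs0
      exact (mul_eq_zero.mp this).resolve_left hv0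
    exact hx ⟨h4, h2, h3⟩
  have hQ : (-(conj x0 * x0) + conj x1 * x1 + conj x2 * x2 + 2 * conj s * s)
      = (((Complex.normSq v0 * Complex.normSq s + Complex.normSq (x1 + conj v1 * s)
          + Complex.normSq (x2 + conj v2 * s)
          + Complex.normSq (conj v2 * x1 - conj v1 * x2)) / Complex.normSq v0 : ℝ) : ℂ) := by
    have hKne : ((Complex.normSq v0 : ℝ) : ℂ) ≠ 0 := by exact_mod_cast hK0.ne'
    rw [Complex.ofReal_div, eq_div_iff hKne]
    linear_combination key
  rw [hQ]
  exact_mod_cast div_pos hRpos hK0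

/-- The `SU(2,1)` metric `η = diag(-1, 1, 1)`. -/
noncomputable def etaM : Matrix (Fin 3) (Fin 3) ℂ :=
  Matrix.diagonal ![-1, 1, 1]

/-- The vector `v` built from the Ernst potential `ℰ = -X - Λ conj(Λ) + i Y`
and the electromagnetic potential `Λ`:
`v = (2√X)⁻¹ (ℰ - 1, 2Λ, ℰ + 1)`. -/
noncomputable def vE (X Y : ℝ) (Λ : ℂ) : Fin 3 → ℂ :=
  let ℰ : ℂ := -(X : ℂ) - Λ * conj Λ + Complex.I * Y
  ![(ℰ - 1) / (2 * Real.sqrt X), Λ / Real.sqrt X, (ℰ + 1) / (2 * Real.sqrt X)]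

/-- The hermitian matrix `Φ` of the Mazur construction:
`Φ_{ab} = η_{ab} + 2 conj(v_a) v_b`. -/
noncomputable def PhiM (X Y : ℝ) (Λ : ℂ) : Matrix (Fin 3) (Fin 3) ℂ :=
  Matrix.of fun a b => etaM a b + 2 * conj (vE X Y Λ a) * vE X Y Λ b

lemma vE_constraint (X Y : ℝ) (hX : 0 < X) (Λ : ℂ) :
    vE X Y Λ 0 * conj (vE X Y Λ 0)
      = 1 + vE X Y Λ 1 * conj (vE X Y Λ 1) + vE X Y Λ 2 * conj (vE X Y Λ 2) := by
  have hr : (Real.sqrt X : ℂ) * (Real.sqrt X : ℂ) = (X : ℂ) := by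
    rw [← Complex.ofReal_mul, Real.mul_self_sqrt hX.le]
  have hr0 : (Real.sqrt X : ℂ) ≠ 0 := by
    simpa using (Real.sqrt_pos.mpr hX).ne'
  simp only [vE, Matrix.cons_val_zero, Matrix.cons_val_one, Matrix.head_cons,
    Matrix.cons_val_two, Matrix.tail_cons]
  simp only [map_add, map_sub, map_div₀, _root_.map_mul, map_neg, _root_.map_one, map_ofNat,
    conj_conj, Complex.conj_ofReal, Complex.conj_I]
  field_simp
  linear_combination (-(4:ℂ)) * hr

lemma PhiM_isHermitian (X Y : ℝ) (Λ : ℂ) : (PhiM X Y Λ).IsHermitian := by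
  apply Matrix.IsHermitian.ext
  intro i j
  fin_cases i <;> fin_cases j <;>
    simp [PhiM, etaM, Matrix.diagonal, map_add, _root_.map_mul, conj_conj] <;> ring

/-- `Φ` is positive definite: the positivity property of the Mazur construction
ensured by choosing the axial Killing vector, for which `X > 0` off the axis. -/
theorem PhiM_posDef (X Y : ℝ) (hX : 0 < X) (Λ : ℂ) :
    (PhiM X Y Λ).PosDef := by
  refine Matrix.posDef_iff_dotProduct_mulVec.mpr ⟨PhiM_isHermitian X Y Λ, fun x hx => ?_⟩
  have hx' : ¬ (x 0 = 0 ∧ x 1 = 0 ∧ x 2 = 0) := by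
    rintro ⟨h0, h1, h2⟩
    apply hx
    funext i
    fin_cases i <;> assumption
  have h := quad_pos (vE X Y Λ 0) (vE X Y Λ 1) (vE X Y Λ 2) (x 0) (x 1) (x 2)
    (vE_constraint X Y hX Λ) hx'
  have heq : star x ⬝ᵥ (PhiM X Y Λ).mulVec x
      = -(conj (x 0) * x 0) + conj (x 1) * x 1 + conj (x 2) * x 2
        + 2 * conj (vE X Y Λ 0 * x 0 + vE X Y Λ 1 * x 1 + vE X Y Λ 2 * x 2)
          * (vE X Y Λ 0 * x 0 + vE X Y Λ 1 * x 1 + vE X Y Λ 2 * x 2) := by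
    simp only [dotProduct, Matrix.mulVec, Fin.sum_univ_three, Pi.star_apply,
      PhiM, etaM, Matrix.of_apply, Matrix.diagonal, Matrix.cons_val_zero,
      Matrix.cons_val_one, Matrix.head_cons, RCLike.star_def,
      Matrix.cons_val_two, Matrix.tail_cons, map_add, _root_.map_mul, conj_conj]
    simp [Matrix.diagonal]
    ring
  rw [heq]
  exact h
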